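/- arXiv:1709.03753 — 5 statements merged into one kernel-verified Lean document; each statement's English description precedes it below -/
import Mathlib

section
/- Let {(ρ_n, ε_n)}_{n≥1} be i.i.d. R²-valued random vectors with -∞ ≤ E(log|ρ_1|) < 0 and E((log|ε_1|)⁺) < ∞. Then the infinite series X_∞ = ε_1 + ρ_1 ε_2 + ρ_1 ρ_2 ε_3 + ... + ρ_1⋯ρ_n ε_{n+1} + ... converges absolutely with probability 1. -/
/-!
Truncating `log |ρ₁|` from below at a large constant `-M` keeps its mean negative, say `I < 0`,
and makes it integrable. The strong law of large numbers then gives, almost surely,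
`∑_{i<n} log |ρ_i| ≤ n I / 2` for large `n`, and (applied to `(log |ε|)⁺`, whose averages
converge) `log |ε_n| ≤ -n I / 4` for large `n`. Hence `|ρ₁ ⋯ ρ_n| |ε_{n+1}| ≤ exp (I / 4) ^ n`
eventually, and the series is dominated by a geometric one.
-/

open MeasureTheory ProbabilityTheory Filter Finset
open scoped Topology ENNReal

lemma tendsto_div_natCast_of_tendsto_sum_range_div {a : ℕ → ℝ} {m : ℝ}
    (h : Tendsto (fun n : ℕ => (∑ i ∈ range n, a i) / n) atTop (𝓝 m)) :
    Tendsto (fun n : ℕ => a n / n) atTop (𝓝 0) := by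
  set A : ℕ → ℝ := fun n => (∑ i ∈ range n, a i) / n
  have hA : Tendsto (fun n => A (n + 1) + A (n + 1) * (1 / n) - A n) atTop (𝓝 (m + m * 0 - m)) :=
    ((h.comp (tendsto_add_atTop_nat 1)).add
      ((h.comp (tendsto_add_atTop_nat 1)).mul tendsto_one_div_atTop_nhds_zero_nat)).sub h
  rw [mul_zero, add_zero, sub_self] at hA
  refine hA.congr' (eventually_ne_atTop 0 |>.mono fun n hn => ?_)
  have hn' : (n : ℝ) ≠ 0 := Nat.cast_ne_zero.2 hn
  simp only [A, Nat.cast_add, Nat.cast_one, sum_range_succ]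
  field_simp
  ring

lemma eventually_le_mul_of_tendsto_div_natCast {x : ℕ → ℝ} {m c : ℝ}
    (h : Tendsto (fun n : ℕ => x n / n) atTop (𝓝 m)) (hmc : m < c) :
    ∀ᶠ n : ℕ in atTop, x n ≤ c * n := by
  filter_upwards [h.eventually_lt_const hmc, eventually_gt_atTop 0] with n hlt hn
  exact ((div_lt_iff₀ (Nat.cast_pos.2 hn)).1 hlt).le

lemma summable_abs_prod_mul_abs_of_eventually_log_le {ρ ε : ℕ → ℝ} {L : ℝ} (hL : L < 0)
    (h : ∀ᶠ n : ℕ in atTop, ∑ i ∈ range n, Real.log |ρ i| + Real.log |ε n| ≤ L * n) :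
    Summable fun n => |∏ i ∈ range n, ρ i| * |ε n| := by
  refine (summable_geometric_of_lt_one (Real.exp_pos L).le (Real.exp_lt_one_iff.2 hL))
    |>.of_norm_bounded_eventually_nat (h.mono fun n hn => ?_)
  calc ‖|∏ i ∈ range n, ρ i| * |ε n|‖ = (∏ i ∈ range n, |ρ i|) * |ε n| := by
        rw [Real.norm_eq_abs, abs_of_nonneg (by positivity), abs_prod]
    _ ≤ (∏ i ∈ range n, Real.exp (Real.log |ρ i|)) * Real.exp (Real.log |ε n|) :=
        mul_le_mul (prod_le_prod (fun i _ => abs_nonneg _) fun i _ => Real.le_exp_log _)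
          (Real.le_exp_log _) (abs_nonneg _) (by positivity)
    _ = Real.exp (∑ i ∈ range n, Real.log |ρ i| + Real.log |ε n|) := by
        rw [Real.exp_add, Real.exp_sum]
    _ ≤ Real.exp L ^ n := by
        rw [← Real.exp_nat_mul, mul_comm]
        exact Real.exp_le_exp.2 hn

lemma exists_integrable_max_const_integral_neg {Ω : Type*} [MeasurableSpace Ω] {μ : Measure Ω}
    [IsFiniteMeasure μ] {f : Ω → ℝ} (hf : AEMeasurable f μ)
    (hpos : ∫⁻ ω, ENNReal.ofReal (f ω) ∂μ < ∞)
    (hlt : ∫⁻ ω, ENNReal.ofReal (f ω) ∂μ < ∫⁻ ω, ENNReal.ofReal (-f ω) ∂μ) :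
    ∃ c : ℝ, Integrable (fun ω => max (f ω) c) μ ∧ ∫ ω, max (f ω) c ∂μ < 0 := by
  have htrunc : Tendsto (fun M : ℕ => ∫⁻ ω, ENNReal.ofReal (-max (f ω) (-M)) ∂μ) atTop
      (𝓝 (∫⁻ ω, ENNReal.ofReal (-f ω) ∂μ)) := by
    refine lintegral_tendsto_of_tendsto_of_monotone
      (fun M => (hf.max aemeasurable_const).neg.ennreal_ofReal)
      (ae_of_all _ fun ω M N hMN => ?_)
      (ae_of_all _ fun ω => tendsto_atTop_of_eventually_const (i₀ := ⌈-f ω⌉₊) fun M hM => ?_)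
    · exact ENNReal.ofReal_le_ofReal <| neg_le_neg <| max_le_max le_rfl <| neg_le_neg <|
        Nat.cast_le.2 hMN
    · rw [max_eq_left]
      linarith [Nat.le_ceil (-f ω), (Nat.cast_le (α := ℝ)).2 hM]
  obtain ⟨M, hM⟩ := (htrunc.eventually_const_lt hlt).exists
  have hint : Integrable (fun ω => max (f ω) (-M)) μ := by
    have hfpos : Integrable (fun ω => max (f ω) 0) μ :=
      ⟨(hf.max aemeasurable_const).aestronglyMeasurable,
        (hasFiniteIntegral_iff_ofReal (ae_of_all _ fun _ => le_max_right _ _)).2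
          (by simpa using hpos)⟩
    refine (hfpos.add (integrable_const (M : ℝ))).mono'
      (hf.max aemeasurable_const).aestronglyMeasurable (ae_of_all _ fun ω => ?_)
    rw [Real.norm_eq_abs, Pi.add_apply, abs_le]
    exact ⟨by linarith [le_max_right (f ω) (-M), le_max_right (f ω) 0],
      max_le (by linarith [le_max_left (f ω) 0, M.cast_nonneg (α := ℝ)])
        (by linarith [le_max_right (f ω) 0])⟩
  refine ⟨-M, hint, ?_⟩
  have hpos_eq : ∫⁻ ω, ENNReal.ofReal (max (f ω) (-M)) ∂μ = ∫⁻ ω, ENNReal.ofReal (f ω) ∂μ :=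
    lintegral_congr fun ω => by simp [ENNReal.ofReal_of_nonpos (neg_nonpos.2 M.cast_nonneg)]
  rw [integral_eq_lintegral_pos_part_sub_lintegral_neg_part hint, hpos_eq, sub_neg]
  exact (ENNReal.toReal_lt_toReal hpos.ne hint.neg.lintegral_lt_top.ne).2 hM

lemma ae_tendsto_sum_range_comp_div_of_iIndepFun {Ω E : Type*} [MeasurableSpace Ω]
    [MeasurableSpace E] {μ : Measure Ω} {X : ℕ → Ω → E} (hindep : iIndepFun X μ)
    (hident : ∀ n, IdentDistrib (X n) (X 0) μ μ) {g : E → ℝ} (hg : Measurable g)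
    (hint : Integrable (g ∘ X 0) μ) :
    ∀ᵐ ω ∂μ, Tendsto (fun n : ℕ => (∑ i ∈ range n, g (X i ω)) / n) atTop (𝓝 μ[g ∘ X 0]) :=
  strong_law_ae_real (fun n => g ∘ X n) hint
    (fun _ _ hij => (hindep.comp (fun _ => g) fun _ => hg).indepFun hij)
    fun n => (hident n).comp hg

/-- Indices start at `0`: `ρ n` is `ρ_{n+1}` of the informal statement. `E(log |ρ₁|) < 0`, possibly
`-∞`, is encoded by comparing the lintegrals of the positive and negative parts of `log |ρ₁|`. -/
theorem stmt0 {Ω : Type*} [MeasurableSpace Ω] (P : Measure Ω) [IsProbabilityMeasure P]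
    (ρ ε : ℕ → Ω → ℝ)
    (hmeas : ∀ n, Measurable (fun ω => (ρ n ω, ε n ω)))
    (hindep : iIndepFun (fun n ω => (ρ n ω, ε n ω)) P)
    (hident : ∀ n, IdentDistrib (fun ω => (ρ n ω, ε n ω)) (fun ω => (ρ 0 ω, ε 0 ω)) P P)
    (hρpos : ∫⁻ ω, ENNReal.ofReal (max (Real.log |ρ 0 ω|) 0) ∂P < ⊤)
    (hρneg : ∫⁻ ω, ENNReal.ofReal (max (Real.log |ρ 0 ω|) 0) ∂P
      < ∫⁻ ω, ENNReal.ofReal (max (-Real.log |ρ 0 ω|) 0) ∂P)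
    (hεlog : ∫⁻ ω, ENNReal.ofReal (max (Real.log |ε 0 ω|) 0) ∂P < ⊤) :
    ∀ᵐ ω ∂P, Summable (fun n => |∏ i ∈ Finset.range n, ρ i ω| * |ε n ω|) := by
  have hlog : Measurable fun x : ℝ => Real.log |x| := Real.measurable_log.comp measurable_abs
  obtain ⟨c, hint, hI⟩ := exists_integrable_max_const_integral_neg (f := fun ω => Real.log |ρ 0 ω|)
    (hlog.comp (measurable_fst.comp (hmeas 0))).aemeasurable
    (by simpa using hρpos) (by simpa using hρneg)
  set I := ∫ ω, max (Real.log |ρ 0 ω|) c ∂P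
  have hg₁ : Measurable fun p : ℝ × ℝ => max (Real.log |p.1|) c :=
    (hlog.comp measurable_fst).max measurable_const
  have hg₂ : Measurable fun p : ℝ × ℝ => max (Real.log |p.2|) 0 :=
    (hlog.comp measurable_snd).max measurable_const
  have hint₂ : Integrable (fun ω => max (Real.log |ε 0 ω|) 0) P :=
    ⟨(hg₂.comp (hmeas 0)).aestronglyMeasurable,
      (hasFiniteIntegral_iff_ofReal (ae_of_all _ fun _ => le_max_right _ _)).2 hεlog⟩
  filter_upwards [ae_tendsto_sum_range_comp_div_of_iIndepFun hindep hident hg₁ hint,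
    ae_tendsto_sum_range_comp_div_of_iIndepFun hindep hident hg₂ hint₂] with ω hρ hε
  refine summable_abs_prod_mul_abs_of_eventually_log_le (L := I / 4) (by linarith) ?_
  filter_upwards [eventually_le_mul_of_tendsto_div_natCast (m := I) hρ (by linarith : I < I / 2),
    eventually_le_mul_of_tendsto_div_natCast (tendsto_div_natCast_of_tendsto_sum_range_div hε)
      (by linarith : (0 : ℝ) < -I / 4)] with n hρn hεn
  calc ∑ i ∈ range n, Real.log |ρ i ω| + Real.log |ε n ω|
      ≤ ∑ i ∈ range n, max (Real.log |ρ i ω|) c + max (Real.log |ε n ω|) 0 :=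
        add_le_add (sum_le_sum fun i _ => le_max_left _ _) (le_max_left _ _)
    _ ≤ I / 2 * n + -I / 4 * n := add_le_add hρn hεn
    _ = I / 4 * n := by ring
end

section
/- Let {(ρ_n, ε_n)}_{n≥1} be i.i.d. with -∞ ≤ E(log|ρ_1|) < 0 and E((log|ε_1|)⁺) < ∞, let X_0 be a real random variable independent of the sequence, and define X_n = ρ_n X_{n-1} + ε_n. Then X_n converges in distribution as n → ∞ to X_∞ = Σ_{n≥0} ρ_1⋯ρ_n ε_{n+1} (with the convention that the n=0 term is ε_1). -/
/-!
With `f_k y = ρ_k y + ε_k`, the chain is the forward composition `X_n = f_n ∘ ⋯ ∘ f_1 (X_0)`.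
The law of an i.i.d. sequence independent of `X_0` is invariant under permutations, so reversing
the first `n` maps shows that `X_n` has the law of the backward composition
`f_1 ∘ ⋯ ∘ f_n (X_0) = Σ_{k<n} ρ_1⋯ρ_k ε_{k+1} + ρ_1⋯ρ_n X_0`.
The backward iterates converge almost surely: the strong law for `max (log|ρ_i|) (-M)`, with `M`
so large that its mean is still negative, gives `|ρ_1⋯ρ_n| ≤ e^{cn}` eventually for some `c < 0`,
while Borel–Cantelli and `E log⁺|ε_1| < ∞` give `|ε_n| ≤ e^{-cn/2}` eventually. Almost sure
convergence implies convergence in distribution.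
-/

open MeasureTheory ProbabilityTheory Filter Finset Topology

section AffineIteration

variable {R : Type*} [CommSemiring R]

def affineIter (x : R) (v : ℕ → R × R) : ℕ → R
  | 0 => x
  | n + 1 => (v n).1 * affineIter x v n + (v n).2

lemma measurable_affineIter [MeasurableSpace R] [MeasurableMul₂ R] [MeasurableAdd₂ R] (n : ℕ) :
    Measurable fun p : R × (ℕ → R × R) => affineIter p.1 p.2 n := by
  induction n with
  | zero => exact measurable_fst
  | succ n ih => simp only [affineIter]; fun_prop

lemma affineIter_congr {n : ℕ} (x : R) {v w : ℕ → R × R} (h : ∀ j < n, v j = w j) :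
    affineIter x v n = affineIter x w n := by
  induction n with
  | zero => rfl
  | succ n ih => simp only [affineIter, ih fun j hj => h j (by omega), h n n.lt_succ_self]

lemma affineIter_reflect (x : R) (v : ℕ → R × R) (n : ℕ) :
    affineIter x (fun j => v (n - 1 - j)) n =
      ∑ k ∈ range n, (∏ i ∈ range k, (v i).1) * (v k).2 + (∏ i ∈ range n, (v i).1) * x := by
  induction n generalizing v with
  | zero => simp [affineIter]
  | succ n ih =>
    have hshift : affineIter x (fun j => v (n + 1 - 1 - j)) n
        = affineIter x (fun j => v (n - 1 - j + 1)) n :=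
      affineIter_congr x fun j hj => by congr 1; omega
    have hfirst : n + 1 - 1 - n = 0 := by omega
    simp only [affineIter, hshift, ih fun m => v (m + 1), hfirst, sum_range_succ',
      prod_range_succ']
    simp only [range_zero, prod_empty, one_mul, mul_add, mul_sum]
    ring_nf

end AffineIteration

lemma abs_prod_le_exp_sum_log {ι : Type*} (s : Finset ι) (a : ι → ℝ) :
    |∏ i ∈ s, a i| ≤ Real.exp (∑ i ∈ s, Real.log |a i|) := by
  rw [abs_prod, Real.exp_sum]
  exact prod_le_prod (fun i _ => abs_nonneg _) fun i _ => Real.le_exp_log _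

lemma tendsto_zero_of_eventually_abs_le_exp {a : ℕ → ℝ} {c : ℝ} (hc : c < 0)
    (ha : ∀ᶠ n in atTop, |a n| ≤ Real.exp (c * n)) : Tendsto a atTop (𝓝 0) := by
  refine squeeze_zero_norm' ha ?_
  simp_rw [mul_comm c, Real.exp_nat_mul]
  exact tendsto_pow_atTop_nhds_zero_of_lt_one (Real.exp_nonneg _) (Real.exp_lt_one_iff.2 hc)

lemma summable_mul_of_eventually_abs_le_exp {a b : ℕ → ℝ} {c d : ℝ} (hcd : c + d < 0)
    (ha : ∀ᶠ n in atTop, |a n| ≤ Real.exp (c * n))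
    (hb : ∀ᶠ n in atTop, |b n| ≤ Real.exp (d * n)) : Summable fun n => a n * b n := by
  refine (summable_geometric_of_lt_one (Real.exp_nonneg _)
    (Real.exp_lt_one_iff.2 hcd)).of_norm_bounded_eventually_nat ?_
  filter_upwards [ha, hb] with n han hbn
  calc ‖a n * b n‖ = |a n| * |b n| := by rw [Real.norm_eq_abs, abs_mul]
    _ ≤ Real.exp (c * n) * Real.exp (d * n) := by gcongr
    _ = Real.exp (c + d) ^ n := by rw [← Real.exp_add, ← Real.exp_nat_mul]; ring_nf

namespace ProbabilityTheory

variable {Ω ι β E : Type*} [MeasurableSpace Ω] [MeasurableSpace β] [MeasurableSpace E]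
  {P : Measure Ω} {q : ι → Ω → E} {i₀ : ι}

lemma iIndepFun.map_comp_perm (hq : ∀ i, Measurable (q i)) (hind : iIndepFun q P)
    (hid : ∀ i, IdentDistrib (q i) (q i₀) P P) (e : Equiv.Perm ι) :
    P.map (fun ω i => q (e i) ω) = P.map (fun ω i => q i ω) := by
  rw [(hind.precomp e.injective).map_fun_eq_infinitePi_map fun i => hq (e i),
    hind.map_fun_eq_infinitePi_map hq]
  simp only [(hid _).map_eq]

lemma IndepFun.identDistrib_prodMk_comp_perm [IsProbabilityMeasure P] {Z : Ω → β}
    (hZ : Measurable Z) (hZq : IndepFun Z (fun ω i => q i ω) P) (hq : ∀ i, Measurable (q i))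
    (hind : iIndepFun q P) (hid : ∀ i, IdentDistrib (q i) (q i₀) P P) (e : Equiv.Perm ι) :
    IdentDistrib (fun ω => (Z ω, fun i => q (e i) ω)) (fun ω => (Z ω, fun i => q i ω)) P P := by
  have hreindex : Measurable fun (v : ι → E) i => v (e i) := by fun_prop
  have hZqe : IndepFun Z (fun ω i => q (e i) ω) P := hZq.comp measurable_id hreindex
  refine ⟨by fun_prop, by fun_prop, ?_⟩
  rw [hZqe.map_prod_eq_prod_map_map hZ.aemeasurable (measurable_pi_iff.2 (hq <| e ·)).aemeasurable,
    hZq.map_prod_eq_prod_map_map hZ.aemeasurable (measurable_pi_iff.2 hq).aemeasurable,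
    hind.map_comp_perm hq hid e]

end ProbabilityTheory

lemma identDistrib_affineIter_sum_prod {Ω : Type*} [MeasurableSpace Ω] {P : Measure Ω}
    [IsProbabilityMeasure P] {q : ℕ → Ω → ℝ × ℝ} {Z : Ω → ℝ} (hZ : Measurable Z)
    (hZq : IndepFun Z (fun ω i => q i ω) P) (hq : ∀ i, Measurable (q i))
    (hind : iIndepFun q P) (hid : ∀ i, IdentDistrib (q i) (q 0) P P) (n : ℕ) :
    IdentDistrib (fun ω => affineIter (Z ω) (fun i => q i ω) n)
      (fun ω => ∑ k ∈ range n, (∏ i ∈ range k, (q i ω).1) * (q k ω).2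
        + (∏ i ∈ range n, (q i ω).1) * Z ω) P P := by
  let e : Equiv.Perm ℕ := Function.Involutive.toPerm (fun i => if i < n then n - 1 - i else i)
    fun i => by dsimp only; split_ifs <;> omega
  have hreflect : ∀ ω, affineIter (Z ω) (fun i => q (e i) ω) n
      = ∑ k ∈ range n, (∏ i ∈ range k, (q i ω).1) * (q k ω).2
        + (∏ i ∈ range n, (q i ω).1) * Z ω := fun ω => by
    rw [← affineIter_reflect]
    exact affineIter_congr _ fun j hj => by rw [show e j = n - 1 - j from if_pos hj]
  have := ((hZq.identDistrib_prodMk_comp_perm hZ hq hind hid e).comp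
    (measurable_affineIter n)).symm
  simpa only [Function.comp_def, hreflect] using this

section LogMoments

variable {Ω : Type*} [MeasurableSpace Ω] {P : Measure Ω} [IsProbabilityMeasure P]

lemma exists_integral_max_neg_natCast_lt_zero {L : Ω → ℝ} (hL : Measurable L)
    (hpos : ∫⁻ ω, ENNReal.ofReal (L ω) ∂P < ⊤)
    (hneg : ∫⁻ ω, ENNReal.ofReal (L ω) ∂P < ∫⁻ ω, ENNReal.ofReal (-L ω) ∂P) :
    ∃ M : ℕ, Integrable (fun ω => max (L ω) (-M)) P ∧ ∫ ω, max (L ω) (-M) ∂P < 0 := by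
  have hmct : Tendsto (fun M : ℕ => ∫⁻ ω, ENNReal.ofReal (min (-L ω) M) ∂P) atTop
      (𝓝 (∫⁻ ω, ENNReal.ofReal (-L ω) ∂P)) := by
    refine lintegral_tendsto_of_tendsto_of_monotone (fun M => by fun_prop)
      (ae_of_all _ fun ω M M' hM => ENNReal.ofReal_le_ofReal (min_le_min_left _ (by simpa)))
      (ae_of_all _ fun ω => tendsto_const_nhds.congr' ?_)
    filter_upwards [eventually_ge_atTop ⌈-L ω⌉₊] with M hM
    rw [min_eq_left (Nat.ceil_le.1 hM)]
  obtain ⟨M, hM⟩ := (hmct.eventually (lt_mem_nhds hneg)).exists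
  have hint : Integrable (fun ω => max (L ω) (-M)) P := by
    have hposint : Integrable (fun ω => max (L ω) 0) P :=
      ⟨by fun_prop, (hasFiniteIntegral_iff_ofReal (ae_of_all _ fun ω => le_max_right _ _)).2
        (by simpa [ENNReal.ofReal_max] using hpos)⟩
    refine (hposint.add (integrable_const (M : ℝ))).mono' (by fun_prop) (ae_of_all _ fun ω => ?_)
    have hM0 : (0 : ℝ) ≤ M := M.cast_nonneg
    show |max (L ω) (-M)| ≤ max (L ω) 0 + M
    rw [abs_le]
    constructor
    · linarith [le_max_right (L ω) (-M), le_max_right (L ω) 0]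
    · exact max_le (by linarith [le_max_left (L ω) 0]) (by linarith [le_max_right (L ω) 0])
  refine ⟨M, hint, ?_⟩
  have hpos_part : ∀ ω, ENNReal.ofReal (max (L ω) (-M)) = ENNReal.ofReal (L ω) := fun ω => by
    simp [ENNReal.ofReal_max, ENNReal.ofReal_of_nonpos]
  have hneg_part : ∀ ω, -max (L ω) (-M) = min (-L ω) M := fun ω => by
    rw [← min_neg_neg, neg_neg]
  have htrunc_ne_top : ∫⁻ ω, ENNReal.ofReal (min (-L ω) M) ∂P ≠ ⊤ :=
    ne_top_of_le_ne_top (b := ENNReal.ofReal M) ENNReal.ofReal_ne_top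
      ((lintegral_mono fun ω => ENNReal.ofReal_le_ofReal (min_le_right _ _)).trans (by simp))
  rw [integral_eq_lintegral_pos_part_sub_lintegral_neg_part hint, sub_neg]
  simp only [hpos_part, hneg_part]
  exact (ENNReal.toReal_lt_toReal hpos.ne htrunc_ne_top).2 hM

lemma ae_eventually_sum_le_mul_of_lintegral_lt {L : ℕ → Ω → ℝ} (hL : Measurable (L 0))
    (hindep : Pairwise fun i j => IndepFun (L i) (L j) P)
    (hident : ∀ i, IdentDistrib (L i) (L 0) P P)
    (hpos : ∫⁻ ω, ENNReal.ofReal (L 0 ω) ∂P < ⊤)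
    (hneg : ∫⁻ ω, ENNReal.ofReal (L 0 ω) ∂P < ∫⁻ ω, ENNReal.ofReal (-L 0 ω) ∂P) :
    ∃ c < 0, ∀ᵐ ω ∂P, ∀ᶠ n in atTop, ∑ i ∈ range n, L i ω ≤ c * n := by
  obtain ⟨M, hint, hmean⟩ := exists_integral_max_neg_natCast_lt_zero hL hpos hneg
  let trunc : ℝ → ℝ := fun x => max x (-M)
  have htrunc : Measurable trunc := by fun_prop
  have hslln := strong_law_ae_real (fun i => trunc ∘ L i) hint
    (fun i j hij => (hindep hij).comp htrunc htrunc) fun i => (hident i).comp htrunc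
  set m := ∫ ω, max (L 0 ω) (-M) ∂P
  refine ⟨m / 2, by linarith, ?_⟩
  filter_upwards [hslln] with ω hω
  filter_upwards [hω.eventually_lt_const (show m < m / 2 by linarith), eventually_gt_atTop 0]
    with n hn hn0
  rw [div_lt_iff₀ (by exact_mod_cast hn0)] at hn
  calc ∑ i ∈ range n, L i ω ≤ ∑ i ∈ range n, trunc (L i ω) :=
        sum_le_sum fun i _ => le_max_left _ _
    _ ≤ m / 2 * n := hn.le

lemma ae_eventually_le_mul_of_identDistrib {Z : ℕ → Ω → ℝ} (hZ : Measurable (Z 0))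
    (hident : ∀ i, IdentDistrib (Z i) (Z 0) P P) (hpos : ∫⁻ ω, ENNReal.ofReal (Z 0 ω) ∂P < ⊤)
    {δ : ℝ} (hδ : 0 < δ) : ∀ᵐ ω ∂P, ∀ᶠ n in atTop, Z n ω ≤ δ * n := by
  let Y : Ω → ℝ := fun ω => max (Z 0 ω) 0 / δ
  have hYint : Integrable Y P :=
    Integrable.div_const ⟨by fun_prop, (hasFiniteIntegral_iff_ofReal
      (ae_of_all _ fun ω => le_max_right _ _)).2 (by simpa [ENNReal.ofReal_max] using hpos)⟩ δ
  have hsum : ∑' n : ℕ, P {ω | Y ω ∈ Set.Ioi (n : ℝ)} < ⊤ := by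
    let : MeasureSpace Ω := ⟨P⟩
    exact tsum_prob_mem_Ioi_lt_top hYint fun ω => div_nonneg (le_max_right _ _) hδ.le
  have hle (n : ℕ) : P (Z n ⁻¹' Set.Ioi (δ * n)) ≤ P {ω | Y ω ∈ Set.Ioi (n : ℝ)} := by
    rw [(hident n).measure_mem_eq measurableSet_Ioi]
    refine measure_mono fun ω hω => ?_
    simp only [Set.mem_preimage, Set.mem_ofPred_eq, Set.mem_Ioi, Y, lt_div_iff₀ hδ] at hω ⊢
    exact (mul_comm δ n ▸ hω).trans_le (le_max_left _ _)
  filter_upwards [ae_eventually_notMem (ENNReal.tsum_le_tsum hle |>.trans_lt hsum).ne]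
    with ω hω
  simpa using hω

end LogMoments

lemma ae_tendsto_sum_prod_mul_add_prod_mul {Ω : Type*} [MeasurableSpace Ω] {P : Measure Ω}
    [IsProbabilityMeasure P] {ρ ε : ℕ → Ω → ℝ}
    (hmeas : ∀ n, Measurable fun ω => (ρ n ω, ε n ω))
    (hindep : iIndepFun (fun n ω => (ρ n ω, ε n ω)) P)
    (hident : ∀ n, IdentDistrib (fun ω => (ρ n ω, ε n ω)) (fun ω => (ρ 0 ω, ε 0 ω)) P P)
    (hρpos : ∫⁻ ω, ENNReal.ofReal (Real.log |ρ 0 ω|) ∂P < ⊤)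
    (hρneg : ∫⁻ ω, ENNReal.ofReal (Real.log |ρ 0 ω|) ∂P
      < ∫⁻ ω, ENNReal.ofReal (-Real.log |ρ 0 ω|) ∂P)
    (hεpos : ∫⁻ ω, ENNReal.ofReal (Real.log |ε 0 ω|) ∂P < ⊤) (Z : Ω → ℝ) :
    ∀ᵐ ω ∂P, Tendsto (fun n => ∑ k ∈ range n, (∏ i ∈ range k, ρ i ω) * ε k ω
      + (∏ i ∈ range n, ρ i ω) * Z ω) atTop (𝓝 (∑' k, (∏ i ∈ range k, ρ i ω) * ε k ω)) := by
  have hlogρ : Measurable fun p : ℝ × ℝ => Real.log |p.1| := by fun_prop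
  have hlogε : Measurable fun p : ℝ × ℝ => Real.log |p.2| := by fun_prop
  obtain ⟨c, hc, hρ⟩ := ae_eventually_sum_le_mul_of_lintegral_lt
    (L := fun i ω => Real.log |ρ i ω|) (hlogρ.comp (hmeas 0))
    (fun i j hij => (hindep.indepFun hij).comp hlogρ hlogρ) (fun i => (hident i).comp hlogρ)
    hρpos hρneg
  have hε := ae_eventually_le_mul_of_identDistrib (Z := fun i ω => Real.log |ε i ω|)
    (hlogε.comp (hmeas 0)) (fun i => (hident i).comp hlogε) hεpos (half_pos (neg_pos.2 hc))
  filter_upwards [hρ, hε] with ω hρω hεω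
  have hprod : ∀ᶠ n : ℕ in atTop, |∏ i ∈ range n, ρ i ω| ≤ Real.exp (c * n) :=
    hρω.mono fun n hn => (abs_prod_le_exp_sum_log _ _).trans (Real.exp_le_exp.2 hn)
  have hεn : ∀ᶠ n : ℕ in atTop, |ε n ω| ≤ Real.exp (-c / 2 * n) :=
    hεω.mono fun n hn => (Real.le_exp_log _).trans (Real.exp_le_exp.2 hn)
  have hsum := summable_mul_of_eventually_abs_le_exp (by linarith) hprod hεn
  simpa using hsum.hasSum.tendsto_sum_nat.add
    ((tendsto_zero_of_eventually_abs_le_exp hc hprod).mul_const (Z ω))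

/-- For the RCAR(1) sequence `X_n = ρ_n X_{n-1} + ε_n` with i.i.d. pairs
`(ρ n, ε n)` (0-indexed: `ρ n, ε n` stand for ρ_{n+1}, ε_{n+1}) independent of `X 0`,
under `-∞ ≤ E(log|ρ₁|) < 0` and `E((log|ε₁|)⁺) < ∞`, `X n` converges in distribution
(tested against bounded continuous functions) to
`X_∞ = Σ_{n≥0} ρ₁⋯ρ_n ε_{n+1} = ∑' n, (∏_{i<n} ρ i) * ε n`. -/
theorem stmt3 {Ω : Type*} [MeasurableSpace Ω] (P : Measure Ω) [IsProbabilityMeasure P]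
    (ρ ε : ℕ → Ω → ℝ) (X0 : Ω → ℝ) (X : ℕ → Ω → ℝ)
    (hmeas : ∀ n, Measurable (fun ω => (ρ n ω, ε n ω)))
    (hX0meas : Measurable X0)
    (hindep : iIndepFun (fun n ω => (ρ n ω, ε n ω)) P)
    (hident : ∀ n, IdentDistrib (fun ω => (ρ n ω, ε n ω)) (fun ω => (ρ 0 ω, ε 0 ω)) P P)
    (hX0indep : IndepFun X0 (fun ω => fun n => (ρ n ω, ε n ω)) P)
    (hX0 : ∀ ω, X 0 ω = X0 ω)
    (hXrec : ∀ n ω, X (n + 1) ω = ρ n ω * X n ω + ε n ω)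
    (hρpos : ∫⁻ ω, ENNReal.ofReal (max (Real.log |ρ 0 ω|) 0) ∂P < ⊤)
    (hρneg : ∫⁻ ω, ENNReal.ofReal (max (Real.log |ρ 0 ω|) 0) ∂P
      < ∫⁻ ω, ENNReal.ofReal (max (-Real.log |ρ 0 ω|) 0) ∂P)
    (hεlog : ∫⁻ ω, ENNReal.ofReal (max (Real.log |ε 0 ω|) 0) ∂P < ⊤) :
    ∀ F : BoundedContinuousFunction ℝ ℝ,
      Tendsto (fun n => ∫ ω, F (X n ω) ∂P) atTop
        (𝓝 (∫ ω, F (∑' n, (∏ i ∈ Finset.range n, ρ i ω) * ε n ω) ∂P)) := by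
  intro F
  simp only [ENNReal.ofReal_max, ENNReal.ofReal_zero, _root_.max_zero] at hρpos hρneg hεlog
  have hX (n : ℕ) : X n = fun ω => affineIter (X0 ω) (fun i => (ρ i ω, ε i ω)) n := by
    induction n with
    | zero => exact funext hX0
    | succ n ih => funext ω; rw [hXrec, ih]; rfl
  have hlaw (n : ℕ) : IdentDistrib (X n) (fun ω => ∑ k ∈ range n, (∏ i ∈ range k, ρ i ω) * ε k ω
      + (∏ i ∈ range n, ρ i ω) * X0 ω) P P := by
    simpa only [hX] using identDistrib_affineIter_sum_prod hX0meas hX0indep hmeas hindep hident n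
  refine Tendsto.congr (fun n => ((hlaw n).comp F.continuous.measurable).integral_eq.symm) ?_
  refine tendsto_integral_of_dominated_convergence (fun _ => ‖F‖)
    (fun n => F.continuous.comp_aestronglyMeasurable (hlaw n).aemeasurable_snd.aestronglyMeasurable)
    (integrable_const _) (fun n => ae_of_all _ fun ω => F.norm_coe_le_norm _) ?_
  filter_upwards [ae_tendsto_sum_prod_mul_add_prod_mul hmeas hindep hident hρpos hρneg hεlog X0]
    with ω hω
  exact (F.continuous.tendsto _).comp hω
end

section
/- Let X_∞ be a real random variable that is not almost surely constant, and suppose that for every a ∈ R and every n, the conditional probability E(1{X_∞ = a} | F_n) is bounded above by p := sup_{b∈R} P(X_∞ = b) < 1, where F_n is a filtration whose limit σ-algebra makes X_∞ measurable. Then P(X_∞ = a) = 0 for all a ∈ R. -/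
open MeasureTheory ProbabilityTheory Filter

/-! By Lévy's upward theorem, `P[1_{X = a} | 𝓕 n] → 1_{X = a}` almost surely, since `{X = a}` is
measurable for `⨆ n, 𝓕 n`. A bound `p < 1` on the conditional probabilities therefore passes to the
`{0, 1}`-valued limit, which must vanish almost surely. -/

theorem ae_le_of_forall_ae_condExp_le {Ω : Type*} {m0 : MeasurableSpace Ω} {P : Measure Ω}
    [IsFiniteMeasure P] {𝓕 : Filtration ℕ m0} {g : Ω → ℝ} (hg : Integrable g P)
    (hgm : StronglyMeasurable[⨆ n, 𝓕 n] g) {p : ℝ} (h : ∀ n, ∀ᵐ ω ∂P, P[g | 𝓕 n] ω ≤ p) :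
    ∀ᵐ ω ∂P, g ω ≤ p := by
  filter_upwards [hg.tendsto_ae_condExp hgm, ae_all_iff.2 h] with ω hlim hle
  exact le_of_tendsto' hlim hle

theorem measure_eq_zero_of_ae_indicator_le {Ω : Type*} {m0 : MeasurableSpace Ω} {P : Measure Ω}
    {s : Set Ω} {p : ℝ} (hp : p < 1) (h : ∀ᵐ ω ∂P, s.indicator (fun _ => (1 : ℝ)) ω ≤ p) :
    P s = 0 := by
  rw [measure_eq_zero_iff_ae_notMem]
  filter_upwards [h] with ω hω hmem
  rw [Set.indicator_of_mem hmem] at hω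
  linarith

theorem stmt5_general {Ω : Type*} {m0 : MeasurableSpace Ω} (P : Measure Ω) [IsProbabilityMeasure P]
    (𝓕 : Filtration ℕ m0) (X : Ω → ℝ)
    (hX : Measurable[⨆ n, 𝓕 n] X)
    (p : ℝ) (hp : p < 1)
    (hcond : ∀ a : ℝ, ∀ n : ℕ, ∀ᵐ ω ∂P,
      (P[Set.indicator {ω | X ω = a} (fun _ => (1 : ℝ)) | 𝓕 n]) ω ≤ p) :
    ∀ a : ℝ, P {ω | X ω = a} = 0 := by
  intro a
  have hmeas : MeasurableSet[⨆ n, 𝓕 n] {ω | X ω = a} := hX (measurableSet_singleton a)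
  have hint : Integrable ({ω | X ω = a}.indicator fun _ => (1 : ℝ)) P :=
    (integrable_const 1).indicator (iSup_le (fun n => 𝓕.le n) _ hmeas)
  exact measure_eq_zero_of_ae_indicator_le hp
    (ae_le_of_forall_ae_condExp_le hint (stronglyMeasurable_const.indicator hmeas) (hcond a))

/-- Let `X∞` be a real random variable that is not a.s. constant,
measurable w.r.t. the limit σ-algebra `⨆ n, 𝓕 n` of a filtration `𝓕`. Suppose
`p < 1` bounds `P(X∞ = b)` for every `b`, and for every `a` and `n` the conditional
probability `E[1_{X∞ = a} | 𝓕 n]` is a.s. bounded above by `p`. Then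
`P(X∞ = a) = 0` for all `a`. -/
theorem stmt5 {Ω : Type*} {m0 : MeasurableSpace Ω} (P : Measure Ω) [IsProbabilityMeasure P]
    (𝓕 : Filtration ℕ m0) (X : Ω → ℝ)
    (hX : Measurable[⨆ n, 𝓕 n] X)
    (hnc : ¬ ∃ c : ℝ, ∀ᵐ ω ∂P, X ω = c)
    (p : ℝ) (hp : p < 1)
    (hsup : ∀ b : ℝ, (P {ω | X ω = b}).toReal ≤ p)
    (hcond : ∀ a : ℝ, ∀ n : ℕ, ∀ᵐ ω ∂P,
      (P[Set.indicator {ω | X ω = a} (fun _ => (1 : ℝ)) | 𝓕 n]) ω ≤ p) :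
    ∀ a : ℝ, P {ω | X ω = a} = 0 :=
  stmt5_general P 𝓕 X hX p hp hcond
end

section
/- Let {X_n}_{n≥0} be a Markov chain satisfying Definition 2 above ((A, ε, φ, n_0)-recurrence). Then {X_n} is φ-recurrent in the sense of Definition 1 with respect to the measure φ: for any measurable set E with φ(E) > 0, P(τ_E < ∞ | X_0 = x) = 1 for all x, where τ_E = min{n ≥ 1 : X_n ∈ E}. -/
open MeasureTheory ProbabilityTheory Filter
open scoped ENNReal Topology

section AuxStmt17

variable {S : Type*} [MeasurableSpace S] {Ω : Type*} [m0 : MeasurableSpace Ω]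

/-- The natural filtration of the process `X`. -/
def stmt17natF (X : ℕ → Ω → S) (hX : ∀ n, Measurable (X n)) : Filtration ℕ m0 where
  seq n := MeasurableSpace.comap (fun ω => (fun i : Fin (n + 1) => X i ω)) inferInstance
  mono' := by
    intro n m hnm
    show MeasurableSpace.comap (fun ω => (fun i : Fin (n + 1) => X i ω)) inferInstance
      ≤ MeasurableSpace.comap (fun ω => (fun i : Fin (m + 1) => X i ω)) inferInstance
    have hfac : (fun ω => (fun i : Fin (n + 1) => X i ω))
        = (fun p : Fin (m + 1) → S => fun i : Fin (n + 1) => p (Fin.castLE (by omega) i)) ∘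
          (fun ω => (fun i : Fin (m + 1) => X i ω)) := rfl
    rw [hfac, ← MeasurableSpace.comap_comp]
    exact MeasurableSpace.comap_mono
      (Measurable.comap_le (measurable_pi_lambda _ fun i => measurable_pi_apply _))
  le' n := Measurable.comap_le (measurable_pi_lambda _ fun i => hX i)

lemma stmt17_measurable_X (X : ℕ → Ω → S) (hX : ∀ n, Measurable (X n)) (n : ℕ) :
    Measurable[stmt17natF X hX n] (X n) := by
  have hT : Measurable[stmt17natF X hX n] (fun ω => (fun i : Fin (n + 1) => X i ω)) :=
    Measurable.of_comap_le le_rfl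
  exact (measurable_pi_apply (⟨n, n.lt_succ_self⟩ : Fin (n + 1))).comp hT

/-- Measurable, `[0,1]`-valued functions. -/
def Ok01 (g : S → ℝ) : Prop := Measurable g ∧ ∀ s, 0 ≤ g s ∧ g s ≤ 1

lemma stmt17_integrable_of_le_one {α : Type*} [MeasurableSpace α] {ν : Measure α}
    [IsFiniteMeasure ν] {f : α → ℝ} (hm : AEStronglyMeasurable f ν) (h0 : ∀ a, 0 ≤ f a)
    (h1 : ∀ a, f a ≤ 1) : Integrable f ν :=
  ⟨hm, HasFiniteIntegral.of_bounded (C := 1) (ae_of_all _ fun a => by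
    rw [Real.norm_eq_abs, abs_le]; exact ⟨by linarith [h0 a], h1 a⟩)⟩

lemma Ok01.kernelInt (κ : Kernel S S) [IsMarkovKernel κ] {h : S → ℝ} (hh : Ok01 h) :
    Ok01 fun s => ∫ t, h t ∂(κ s) := by
  constructor
  · have hsm : StronglyMeasurable (Function.uncurry fun (_ : S) t => h t) :=
      (hh.1.comp measurable_snd).stronglyMeasurable
    exact (StronglyMeasurable.integral_kernel_prod_right (κ := κ)
      (f := fun _ t => h t) hsm).measurable
  · intro s
    refine ⟨integral_nonneg fun t => (hh.2 t).1, ?_⟩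
    calc ∫ t, h t ∂(κ s) ≤ ∫ _t, (1 : ℝ) ∂(κ s) :=
          integral_mono (stmt17_integrable_of_le_one hh.1.aestronglyMeasurable
            (fun t => (hh.2 t).1) (fun t => (hh.2 t).2)) (integrable_const 1)
            fun t => (hh.2 t).2
      _ = 1 := by simp

lemma stmt17_ok_ind {E : Set S} (hE : MeasurableSet E) :
    Ok01 (Set.indicator E fun _ => (1 : ℝ)) :=
  ⟨measurable_one.indicator hE, fun s => ⟨Set.indicator_nonneg (fun _ _ => zero_le_one) _,
    Set.indicator_apply_le' (fun _ => le_rfl) (fun _ => zero_le_one)⟩⟩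

lemma stmt17_ind_comp (E : Set S) (f : Ω → S) :
    (fun ω => Set.indicator E (fun _ => (1 : ℝ)) (f ω))
      = Set.indicator (f ⁻¹' E) fun _ => (1 : ℝ) := by
  ext ω; classical
  by_cases hω : f ω ∈ E
  · rw [Set.indicator_of_mem hω, Set.indicator_of_mem (by exact hω)]
  · rw [Set.indicator_of_notMem hω, Set.indicator_of_notMem (by exact hω)]

lemma stmt17_integral_ind {ν : Measure Ω} {B : Set Ω} (hB : MeasurableSet B) :
    ∫ ω, Set.indicator B (fun _ => (1 : ℝ)) ω ∂ν = (ν B).toReal := by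
  rw [integral_indicator_const (1 : ℝ) hB, smul_eq_mul, mul_one, measureReal_def]

noncomputable def uList (κ : Kernel S S) : List (S → ℝ) → S → ℝ
  | [] => fun _ => 1
  | g :: l => fun s => ∫ t, g t * uList κ l t ∂(κ s)

lemma uList_ok (κ : Kernel S S) [IsMarkovKernel κ] (l : List (S → ℝ))
    (hl : ∀ g ∈ l, Ok01 g) : Ok01 (uList κ l) := by
  induction l with
  | nil => exact ⟨measurable_const, fun s => ⟨zero_le_one, le_rfl⟩⟩
  | cons g l ih =>
    have hg : Ok01 g := hl g (List.mem_cons_self)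
    have hu : Ok01 (uList κ l) := ih fun g' h => hl g' (List.mem_cons_of_mem _ h)
    have hmul : Measurable fun t => g t * uList κ l t := hg.1.mul hu.1
    have h01 : ∀ t, 0 ≤ g t * uList κ l t ∧ g t * uList κ l t ≤ 1 := fun t =>
      ⟨mul_nonneg (hg.2 t).1 (hu.2 t).1,
       mul_le_one₀ (hg.2 t).2 (hu.2 t).1 (hu.2 t).2⟩
    refine ⟨?_, fun s => ⟨integral_nonneg fun t => (h01 t).1, ?_⟩⟩
    · have hsm : StronglyMeasurable (Function.uncurry fun (_ : S) t => g t * uList κ l t) :=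
        (hmul.comp measurable_snd).stronglyMeasurable
      exact (StronglyMeasurable.integral_kernel_prod_right (κ := κ)
        (f := fun _ t => g t * uList κ l t) hsm).measurable
    · calc ∫ t, g t * uList κ l t ∂(κ s) ≤ ∫ _t, (1 : ℝ) ∂(κ s) :=
            integral_mono (stmt17_integrable_of_le_one hmul.aestronglyMeasurable
              (fun t => (h01 t).1) (fun t => (h01 t).2)) (integrable_const 1)
              fun t => (h01 t).2
        _ = 1 := by simp

def pProd (X : ℕ → Ω → S) : List (S → ℝ) → ℕ → Ω → ℝ
  | [], _, _ => 1
  | g :: l, n, ω => g (X (n + 1) ω) * pProd X l (n + 1) ω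

lemma pProd_ok (X : ℕ → Ω → S) (hX : ∀ n, Measurable (X n)) (l : List (S → ℝ))
    (hl : ∀ g ∈ l, Ok01 g) (n : ℕ) :
    Measurable (fun ω => pProd X l n ω) ∧ ∀ ω, 0 ≤ pProd X l n ω ∧ pProd X l n ω ≤ 1 := by
  induction l generalizing n with
  | nil => exact ⟨measurable_const, fun ω => ⟨zero_le_one, le_rfl⟩⟩
  | cons g l ih =>
    have hg : Ok01 g := hl g (List.mem_cons_self)
    have hp := ih (fun g' h => hl g' (List.mem_cons_of_mem _ h)) (n + 1)
    refine ⟨(hg.1.comp (hX (n + 1))).mul hp.1, fun ω => ⟨?_, ?_⟩⟩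
    · exact mul_nonneg (hg.2 _).1 (hp.2 ω).1
    · exact mul_le_one₀ (hg.2 _).2 (hp.2 ω).1 (hp.2 ω).2

variable {X : ℕ → Ω → S} {κ : Kernel S S} [IsMarkovKernel κ]
  {μ : Measure Ω} [IsProbabilityMeasure μ] (F : Filtration ℕ m0)

/-- one-step Markov property, lintegral form over a set of the past. -/
lemma stmt17_key_lintegral (hX : ∀ n, Measurable (X n))
    (hM : ∀ n (E : Set S), MeasurableSet E →
      μ[fun ω => Set.indicator E (fun _ => (1 : ℝ)) (X (n + 1) ω) | F n]
        =ᵐ[μ] fun ω => (κ (X n ω) E).toReal)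
    (n : ℕ) {B : Set Ω} (hB : MeasurableSet[F n] B)
    {h' : S → ℝ≥0∞} (hh' : Measurable h') :
    ∫⁻ ω in B, h' (X (n + 1) ω) ∂μ = ∫⁻ ω in B, ∫⁻ t, h' t ∂(κ (X n ω)) ∂μ := by
  have hBm : MeasurableSet B := F.le n B hB
  have hbindmeas : Measurable fun ω => κ (X n ω) := κ.measurable.comp (hX n)
  have hmeq : (μ.restrict B).map (X (n + 1)) = (μ.restrict B).bind (fun ω => κ (X n ω)) := by
    ext E hE
    rw [Measure.map_apply (hX (n + 1)) hE, Measure.bind_apply hE hbindmeas.aemeasurable]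
    have h1 : ∫ ω in B, (κ (X n ω) E).toReal ∂μ
        = ∫ ω in B, Set.indicator E (fun _ => (1 : ℝ)) (X (n + 1) ω) ∂μ := by
      refine (setIntegral_congr_ae hBm (((hM n E hE).symm).mono fun ω h _ => h)).trans ?_
      exact setIntegral_condExp (F.le n)
        (stmt17_integrable_of_le_one ((measurable_one.indicator hE).comp (hX (n + 1))
            |>.aestronglyMeasurable)
          (fun ω => Set.indicator_nonneg (fun _ _ => zero_le_one) _)
          (fun ω => Set.indicator_apply_le' (fun _ => le_rfl) (fun _ => zero_le_one))) hB
    have h2 : ∫ ω in B, (κ (X n ω) E).toReal ∂μ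
        = (∫⁻ ω in B, κ (X n ω) E ∂μ).toReal := by
      have hm' : AEMeasurable (fun ω => κ (X n ω) E) (μ.restrict B) :=
        ((κ.measurable_coe hE).comp (hX n)).aemeasurable
      rw [integral_toReal hm' (ae_of_all _ fun ω => measure_lt_top _ _)]
    have h3 : ∫ ω in B, Set.indicator E (fun _ => (1 : ℝ)) (X (n + 1) ω) ∂μ
        = ((μ.restrict B) ((X (n + 1)) ⁻¹' E)).toReal := by
      rw [stmt17_ind_comp, integral_indicator_const (1 : ℝ) ((hX (n + 1)) hE),
        smul_eq_mul, mul_one, measureReal_def]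
    have hfin1 : ∫⁻ ω in B, κ (X n ω) E ∂μ ≠ ∞ := by
      refine ne_of_lt (lt_of_le_of_lt ?_ (measure_lt_top (μ.restrict B) Set.univ))
      calc ∫⁻ ω in B, κ (X n ω) E ∂μ ≤ ∫⁻ _ω in B, 1 ∂μ :=
            lintegral_mono fun ω => prob_le_one
        _ = (μ.restrict B) Set.univ := by rw [lintegral_one]
    rw [h2, h3] at h1
    exact ((ENNReal.toReal_eq_toReal_iff' hfin1 (measure_ne_top _ _)).mp h1).symm
  calc ∫⁻ ω in B, h' (X (n + 1) ω) ∂μ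
      = ∫⁻ s, h' s ∂((μ.restrict B).map (X (n + 1))) := (lintegral_map hh' (hX (n + 1))).symm
    _ = ∫⁻ s, h' s ∂((μ.restrict B).bind (fun ω => κ (X n ω))) := by rw [hmeq]
    _ = ∫⁻ ω in B, ∫⁻ t, h' t ∂(κ (X n ω)) ∂μ := Measure.lintegral_bind hbindmeas.aemeasurable hh'.aemeasurable

/-- one-step Markov property for `[0,1]`-valued functions. -/
lemma stmt17_step (hX : ∀ n, Measurable (X n)) (hXF : ∀ n, Measurable[F n] (X n))
    (hM : ∀ n (E : Set S), MeasurableSet E →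
      μ[fun ω => Set.indicator E (fun _ => (1 : ℝ)) (X (n + 1) ω) | F n]
        =ᵐ[μ] fun ω => (κ (X n ω) E).toReal)
    {h : S → ℝ} (hh : Ok01 h) (n : ℕ) :
    μ[fun ω => h (X (n + 1) ω) | F n] =ᵐ[μ] fun ω => ∫ t, h t ∂(κ (X n ω)) := by
  have hki : Ok01 fun s => ∫ t, h t ∂(κ s) := hh.kernelInt κ
  have hbnd : ∀ ω, ∫⁻ t, ENNReal.ofReal (h t) ∂(κ (X n ω)) ≤ 1 := fun ω => by
    calc ∫⁻ t, ENNReal.ofReal (h t) ∂(κ (X n ω)) ≤ ∫⁻ _t, 1 ∂(κ (X n ω)) :=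
          lintegral_mono fun t => ENNReal.ofReal_le_one.mpr (hh.2 t).2
      _ = 1 := by simp
  refine (ae_eq_condExp_of_forall_setIntegral_eq (F.le n) ?_ ?_ ?_ ?_).symm
  · exact stmt17_integrable_of_le_one ((hh.1.comp (hX (n + 1))).aestronglyMeasurable)
      (fun ω => (hh.2 _).1) (fun ω => (hh.2 _).2)
  · intro s _ _
    exact (stmt17_integrable_of_le_one ((hki.1.comp (hX n)).aestronglyMeasurable)
      (fun ω => (hki.2 _).1) (fun ω => (hki.2 _).2)).integrableOn
  · intro B hB _
    have hE1 : ∫ ω in B, ∫ t, h t ∂(κ (X n ω)) ∂μ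
        = (∫⁻ ω in B, ∫⁻ t, ENNReal.ofReal (h t) ∂(κ (X n ω)) ∂μ).toReal := by
      have hptw : ∀ ω, ∫ t, h t ∂(κ (X n ω))
          = (∫⁻ t, ENNReal.ofReal (h t) ∂(κ (X n ω))).toReal := fun ω =>
        integral_eq_lintegral_of_nonneg_ae (ae_of_all _ fun t => (hh.2 t).1)
          hh.1.aestronglyMeasurable
      simp_rw [hptw]
      have hm' : AEMeasurable (fun ω => ∫⁻ t, ENNReal.ofReal (h t) ∂(κ (X n ω)))
          (μ.restrict B) :=
        ((Measurable.lintegral_kernel (κ := κ)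
          (ENNReal.measurable_ofReal.comp hh.1)).comp (hX n)).aemeasurable
      rw [integral_toReal hm'
        (ae_of_all _ fun ω => lt_of_le_of_lt (hbnd ω) ENNReal.one_lt_top)]
    have hE2 : ∫ ω in B, h (X (n + 1) ω) ∂μ
        = (∫⁻ ω in B, ENNReal.ofReal (h (X (n + 1) ω)) ∂μ).toReal :=
      integral_eq_lintegral_of_nonneg_ae (ae_of_all _ fun ω => (hh.2 _).1)
        ((hh.1.comp (hX (n + 1))).aestronglyMeasurable)
    rw [hE1, hE2]
    congr 1
    exact (stmt17_key_lintegral F hX hM n hB (h' := fun t => ENNReal.ofReal (h t))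
        (ENNReal.measurable_ofReal.comp hh.1)).symm
  · exact StronglyMeasurable.aestronglyMeasurable
      ((hki.1.stronglyMeasurable).comp_measurable (hXF n))

/-- iterated Markov property for products along the path. -/
lemma stmt17_master (hX : ∀ n, Measurable (X n)) (hXF : ∀ n, Measurable[F n] (X n))
    (hM : ∀ n (E : Set S), MeasurableSet E →
      μ[fun ω => Set.indicator E (fun _ => (1 : ℝ)) (X (n + 1) ω) | F n]
        =ᵐ[μ] fun ω => (κ (X n ω) E).toReal)
    (l : List (S → ℝ)) (hl : ∀ g ∈ l, Ok01 g) (n : ℕ) :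
    μ[fun ω => pProd X l n ω | F n] =ᵐ[μ] fun ω => uList κ l (X n ω) := by
  induction l generalizing n with
  | nil =>
    have h1 : μ[fun _ω => (1 : ℝ) | F n] = fun _ω => (1 : ℝ) := condExp_const (F.le n) 1
    exact Filter.EventuallyEq.of_eq h1
  | cons g l ih =>
    have hg : Ok01 g := hl g (List.mem_cons_self)
    have hl' : ∀ g' ∈ l, Ok01 g' := fun g' h => hl g' (List.mem_cons_of_mem _ h)
    have hu : Ok01 (uList κ l) := uList_ok κ l hl'
    have hpp := pProd_ok X hX l hl' (n + 1)
    have hppc := pProd_ok X hX (g :: l) hl n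
    have hfm : StronglyMeasurable[F (n + 1)] (fun ω => g (X (n + 1) ω)) :=
      (hg.1.comp (hXF (n + 1))).stronglyMeasurable
    have hint2 : Integrable (fun ω => pProd X l (n + 1) ω) μ :=
      stmt17_integrable_of_le_one hpp.1.aestronglyMeasurable (fun ω => (hpp.2 ω).1)
        (fun ω => (hpp.2 ω).2)
    have hintc : Integrable (fun ω => pProd X (g :: l) n ω) μ :=
      stmt17_integrable_of_le_one hppc.1.aestronglyMeasurable (fun ω => (hppc.2 ω).1)
        (fun ω => (hppc.2 ω).2)
    have hpull := condExp_mul_of_stronglyMeasurable_left (μ := μ) hfm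
      (g := fun ω => pProd X l (n + 1) ω) hintc hint2
    have hinner : μ[fun ω => pProd X (g :: l) n ω | F (n + 1)]
        =ᵐ[μ] fun ω => g (X (n + 1) ω) * uList κ l (X (n + 1) ω) := by
      refine hpull.trans ?_
      filter_upwards [ih hl' (n + 1)] with ω hω
      simp only [Pi.mul_apply]
      rw [hω]
    have htower := (condExp_condExp_of_le (m₁ := F n) (m₂ := F (n + 1))
      (F.mono (Nat.le_succ n)) (F.le (n + 1))
      (f := fun ω => pProd X (g :: l) n ω) (μ := μ)).symm
    refine htower.trans ?_
    refine (condExp_congr_ae hinner).trans ?_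
    have hok : Ok01 (fun s => g s * uList κ l s) :=
      ⟨hg.1.mul hu.1, fun s => ⟨mul_nonneg (hg.2 s).1 (hu.2 s).1,
        mul_le_one₀ (hg.2 s).2 (hu.2 s).1 (hu.2 s).2⟩⟩
    exact stmt17_step F hX hXF hM hok n

lemma stmt17_integral_pProd (hX : ∀ n, Measurable (X n)) (hXF : ∀ n, Measurable[F n] (X n))
    (hM : ∀ n (E : Set S), MeasurableSet E →
      μ[fun ω => Set.indicator E (fun _ => (1 : ℝ)) (X (n + 1) ω) | F n]
        =ᵐ[μ] fun ω => (κ (X n ω) E).toReal)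
    (l : List (S → ℝ)) (hl : ∀ g ∈ l, Ok01 g) (n : ℕ) :
    ∫ ω, pProd X l n ω ∂μ = ∫ ω, uList κ l (X n ω) ∂μ := by
  have hpp := pProd_ok X hX l hl n
  calc ∫ ω, pProd X l n ω ∂μ
      = ∫ ω, (μ[fun ω' => pProd X l n ω' | F n]) ω ∂μ :=
        (integral_condExp (F.le n) (f := fun ω' => pProd X l n ω') (μ := μ)).symm
    _ = ∫ ω, uList κ l (X n ω) ∂μ :=
        integral_congr_ae (stmt17_master F hX hXF hM l hl n)

/-- the list computing a single indicator after `k + 1` steps. -/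
lemma stmt17_pProd_single (E : Set S) :
    ∀ (k n : ℕ) (ω : Ω),
      pProd X (List.replicate k (fun _ => (1 : ℝ)) ++ [Set.indicator E (fun _ => (1 : ℝ))]) n ω
        = Set.indicator E (fun _ => (1 : ℝ)) (X (n + k + 1) ω) := by
  intro k
  induction k with
  | zero =>
    intro n ω
    show Set.indicator E (fun _ => (1 : ℝ)) (X (n + 1) ω) * 1 = _
    rw [mul_one]
  | succ k ih =>
    intro n ω
    have hrep : List.replicate (k + 1) (fun _ => (1 : ℝ))
          ++ [Set.indicator E (fun _ => (1 : ℝ))]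
        = (fun _ => (1 : ℝ)) :: (List.replicate k (fun _ => (1 : ℝ))
          ++ [Set.indicator E (fun _ => (1 : ℝ))]) := by
      simp [List.replicate_succ]
    rw [hrep]
    show (1 : ℝ) * pProd X _ (n + 1) ω = _
    rw [one_mul, ih (n + 1) ω]
    have hidx : n + 1 + k + 1 = n + (k + 1) + 1 := by omega
    rw [hidx]

/-- the list computing the indicator of "avoiding `A` during `(n, n+M]`". -/
lemma stmt17_pProd_avoid (A : Set S) :
    ∀ (M n : ℕ) (ω : Ω),
      pProd X (List.replicate M (Set.indicator Aᶜ fun _ => (1 : ℝ))) n ω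
        = Set.indicator {ω' | ∀ m, 1 ≤ m → m ≤ M → X (n + m) ω' ∉ A} (fun _ => (1 : ℝ)) ω := by
  intro M
  induction M with
  | zero =>
    intro n ω
    show (1 : ℝ) = _
    rw [Set.indicator_of_mem]
    intro m h1 h0
    exact absurd (h1.trans h0) (by decide)
  | succ M ih =>
    intro n ω
    show Set.indicator Aᶜ (fun _ => (1 : ℝ)) (X (n + 1) ω)
        * pProd X (List.replicate M (Set.indicator Aᶜ fun _ => (1 : ℝ))) (n + 1) ω = _
    rw [ih (n + 1) ω]
    classical
    by_cases h1 : X (n + 1) ω ∈ A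
    · rw [Set.indicator_of_notMem (by simpa using h1), zero_mul,
        Set.indicator_of_notMem]
      intro hmem
      exact (hmem 1 le_rfl (by omega)) h1
    · rw [Set.indicator_of_mem (by simpa using h1), one_mul]
      by_cases h2 : ω ∈ {ω' | ∀ m, 1 ≤ m → m ≤ M → X (n + 1 + m) ω' ∉ A}
      · rw [Set.indicator_of_mem h2, Set.indicator_of_mem]
        intro m hm1 hm2
        match m, hm1, hm2 with
        | 1, _, _ => exact h1
        | (k + 2), _, hm2 =>
          have hidx : n + (k + 2) = n + 1 + (k + 1) := by omega
          rw [hidx]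
          exact h2 (k + 1) (by omega) (by omega)
      · rw [Set.indicator_of_notMem h2, Set.indicator_of_notMem]
        intro hmem
        refine h2 ?_
        intro m hm1 hm2
        have hidx : n + 1 + m = n + (m + 1) := by omega
        rw [hidx]
        exact hmem (m + 1) (by omega) (by omega)

lemma stmt17_measN {A : Set S} (hA : MeasurableSet A) (hX : ∀ n, Measurable (X n))
    (n M : ℕ) : MeasurableSet {ω | ∀ m, 1 ≤ m → m ≤ M → X (n + m) ω ∉ A} := by
  have hset : {ω | ∀ m, 1 ≤ m → m ≤ M → X (n + m) ω ∉ A}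
      = ⋂ (m : ℕ), ⋂ (_ : 1 ≤ m), ⋂ (_ : m ≤ M), (X (n + m)) ⁻¹' Aᶜ := by
    ext ω; simp [Set.mem_iInter, Set.mem_preimage]
  rw [hset]
  exact MeasurableSet.iInter fun m => MeasurableSet.iInter fun _ =>
    MeasurableSet.iInter fun _ => (hX _) hA.compl

lemma stmt17_measNinf {A : Set S} (hA : MeasurableSet A) (hX : ∀ n, Measurable (X n))
    (n : ℕ) : MeasurableSet {ω | ∀ m, 1 ≤ m → X (n + m) ω ∉ A} := by
  have hset : {ω | ∀ m, 1 ≤ m → X (n + m) ω ∉ A}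
      = ⋂ (m : ℕ), ⋂ (_ : 1 ≤ m), (X (n + m)) ⁻¹' Aᶜ := by
    ext ω; simp [Set.mem_iInter, Set.mem_preimage]
  rw [hset]
  exact MeasurableSet.iInter fun m => MeasurableSet.iInter fun _ => (hX _) hA.compl

end AuxStmt17

/-- For a time-homogeneous Markov chain (laws `P x`, transition kernel
`κ`, natural-filtration Markov property), `(A, ε, φ, n₀)`-recurrence implies Harris
(`φ`-)recurrence: if `P_x(τ_A < ∞) = 1` for all `x` and
`P^{(n₀)}(x, E) ≥ ε φ(E)` for all `x ∈ A` and measurable `E`, then for every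
measurable `E` with `φ(E) > 0` we have `P_x(τ_E < ∞) = 1` for all `x`. -/
theorem stmt17 {S : Type*} [MeasurableSpace S] {Ω : Type*} [m0 : MeasurableSpace Ω]
    (P : S → Measure Ω) (hP : ∀ x, IsProbabilityMeasure (P x))
    (X : ℕ → Ω → S) (hXmeas : ∀ n, Measurable (X n))
    (κ : Kernel S S) [IsMarkovKernel κ]
    (hstart : ∀ x, ∀ᵐ ω ∂P x, X 0 ω = x)
    (hMarkov : ∀ x n (E : Set S), MeasurableSet E →
      (P x)[fun ω => Set.indicator E (fun _ => (1 : ℝ)) (X (n + 1) ω) |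
          MeasurableSpace.comap (fun ω => (fun i : Fin (n + 1) => X i ω)) inferInstance]
        =ᵐ[P x] fun ω => (κ (X n ω) E).toReal)
    (A : Set S) (hA : MeasurableSet A)
    (φ : Measure S) [IsProbabilityMeasure φ]
    (ε : ℝ) (hε : 0 < ε) (n₀ : ℕ) (hn₀ : 1 ≤ n₀)
    (hrecA : ∀ x, P x {ω | ∃ n : ℕ, 1 ≤ n ∧ X n ω ∈ A} = 1)
    (hminor : ∀ x ∈ A, ∀ E : Set S, MeasurableSet E →
      ENNReal.ofReal ε * φ E ≤ P x {ω | X n₀ ω ∈ E}) :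
    ∀ E : Set S, MeasurableSet E → 0 < φ E →
      ∀ x, P x {ω | ∃ n : ℕ, 1 ≤ n ∧ X n ω ∈ E} = 1 := by
  intro E hE hφE x
  haveI : ∀ y, IsProbabilityMeasure (P y) := hP
  set F : Filtration ℕ m0 := stmt17natF X hXmeas with hF
  have hXF : ∀ n, Measurable[F n] (X n) := stmt17_measurable_X X hXmeas
  have hM : ∀ y, ∀ n (E' : Set S), MeasurableSet E' →
      (P y)[fun ω => Set.indicator E' (fun _ => (1 : ℝ)) (X (n + 1) ω) | F n]
        =ᵐ[P y] fun ω => (κ (X n ω) E').toReal := fun y n E' hE' => hMarkov y n E' hE'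
  -- the minorization function w
  set l₁ : List (S → ℝ) := List.replicate (n₀ - 1) (fun _ => (1 : ℝ))
      ++ [Set.indicator E (fun _ => (1 : ℝ))] with hl₁def
  have hl₁ : ∀ g ∈ l₁, Ok01 g := by
    intro g hg
    rcases List.mem_append.mp hg with h | h
    · rw [List.eq_of_mem_replicate h]
      exact ⟨measurable_const, fun s => ⟨zero_le_one, le_rfl⟩⟩
    · rw [List.mem_singleton.mp h]
      exact stmt17_ok_ind hE
  set w : S → ℝ := uList κ l₁ with hwdef
  have hwOk : Ok01 w := uList_ok κ l₁ hl₁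
  have hidx₁ : ∀ n : ℕ, n + (n₀ - 1) + 1 = n + n₀ := fun n => by omega
  have hpProd₁ : ∀ (n : ℕ) (ω : Ω),
      pProd X l₁ n ω = Set.indicator E (fun _ => (1 : ℝ)) (X (n + n₀) ω) := by
    intro n ω
    rw [hl₁def, stmt17_pProd_single E (n₀ - 1) n ω, hidx₁]
  -- evaluation of w
  have hweval : ∀ y : S, w y = (P y {ω | X n₀ ω ∈ E}).toReal := by
    intro y
    have h1 : ∫ ω, pProd X l₁ 0 ω ∂(P y) = ∫ ω, w (X 0 ω) ∂(P y) :=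
      stmt17_integral_pProd F hXmeas hXF (hM y) l₁ hl₁ 0
    have h2 : ∫ ω, w (X 0 ω) ∂(P y) = w y := by
      rw [integral_congr_ae ((hstart y).mono fun ω h => by rw [h])]
      simp
    have h3 : ∫ ω, pProd X l₁ 0 ω ∂(P y) = (P y {ω | X n₀ ω ∈ E}).toReal := by
      have : (fun ω => pProd X l₁ 0 ω)
          = fun ω => Set.indicator E (fun _ => (1 : ℝ)) (X (0 + n₀) ω) := by
        ext ω; exact hpProd₁ 0 ω
      rw [this]
      have h0n : (0 : ℕ) + n₀ = n₀ := by omega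
      rw [h0n, stmt17_ind_comp E (X n₀), stmt17_integral_ind ((hXmeas n₀) hE)]
      rfl
    rw [← h2, ← h1, h3]
  -- the constant c
  set c : ℝ := ε * (φ E).toReal with hcdef
  have hc : 0 < c := mul_pos hε (ENNReal.toReal_pos (ne_of_gt hφE) (measure_ne_top _ _))
  have hwA : ∀ y ∈ A, c ≤ w y := by
    intro y hy
    have h := hminor y hy E hE
    have h' := ENNReal.toReal_mono (measure_ne_top _ _) h
    rw [ENNReal.toReal_mul, ENNReal.toReal_ofReal hε.le] at h'
    rw [hweval y]
    exact h'
  -- the avoiding-A functions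
  set lA : ℕ → List (S → ℝ) :=
    fun M => List.replicate M (Set.indicator Aᶜ fun _ => (1 : ℝ)) with hlAdef
  have hlA : ∀ M, ∀ g ∈ lA M, Ok01 g := by
    intro M g hg
    rw [List.eq_of_mem_replicate hg]
    exact stmt17_ok_ind hA.compl
  set v : ℕ → S → ℝ := fun M => uList κ (lA M) with hvdef
  have hvOk : ∀ M, Ok01 (v M) := fun M => uList_ok κ (lA M) (hlA M)
  -- evaluation of v
  have hveval : ∀ (y : S) (M : ℕ),
      v M y = (P y {ω | ∀ m, 1 ≤ m → m ≤ M → X (0 + m) ω ∉ A}).toReal := by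
    intro y M
    have h1 : ∫ ω, pProd X (lA M) 0 ω ∂(P y) = ∫ ω, v M (X 0 ω) ∂(P y) :=
      stmt17_integral_pProd F hXmeas hXF (hM y) (lA M) (hlA M) 0
    have h2 : ∫ ω, v M (X 0 ω) ∂(P y) = v M y := by
      rw [integral_congr_ae ((hstart y).mono fun ω h => by rw [h])]
      simp
    have h3 : ∫ ω, pProd X (lA M) 0 ω ∂(P y)
        = (P y {ω | ∀ m, 1 ≤ m → m ≤ M → X (0 + m) ω ∉ A}).toReal := by
      have : (fun ω => pProd X (lA M) 0 ω)
          = Set.indicator {ω' | ∀ m, 1 ≤ m → m ≤ M → X (0 + m) ω' ∉ A}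
              (fun _ => (1 : ℝ)) := by
        ext ω; exact stmt17_pProd_avoid A M 0 ω
      rw [this, stmt17_integral_ind (stmt17_measN hA hXmeas 0 M)]
    rw [← h2, ← h1, h3]
  -- v M y → 0
  have hv0 : ∀ y : S, Tendsto (fun M => v M y) atTop (𝓝 0) := by
    intro y
    have hmono : Antitone fun M => {ω | ∀ m, 1 ≤ m → m ≤ M → X (0 + m) ω ∉ A} := by
      intro M M' hMM' ω hω m h1 h2
      exact hω m h1 (h2.trans hMM')
    have hiInter : (⋂ M, {ω | ∀ m, 1 ≤ m → m ≤ M → X (0 + m) ω ∉ A})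
        = {ω | ∃ n : ℕ, 1 ≤ n ∧ X n ω ∈ A}ᶜ := by
      ext ω
      simp only [Set.mem_iInter, Set.mem_setOf_eq, Set.mem_compl_iff, not_exists, not_and]
      constructor
      · intro h n h1 hmem
        exact h n n h1 le_rfl (by simpa using hmem)
      · intro h M m h1 _ hmem
        exact h m h1 (by simpa using hmem)
    have hnull : P y ({ω | ∃ n : ℕ, 1 ≤ n ∧ X n ω ∈ A}ᶜ) = 0 := by
      have hmeas : MeasurableSet {ω | ∃ n : ℕ, 1 ≤ n ∧ X n ω ∈ A} := by
        have : {ω | ∃ n : ℕ, 1 ≤ n ∧ X n ω ∈ A}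
            = ⋃ (n : ℕ), ⋃ (_ : 1 ≤ n), (X n) ⁻¹' A := by
          ext ω; simp [Set.mem_iUnion, Set.mem_preimage]
        rw [this]
        exact MeasurableSet.iUnion fun n => MeasurableSet.iUnion fun _ => (hXmeas n) hA
      rw [measure_compl hmeas (measure_ne_top _ _), hrecA y, measure_univ]
      simp
    have htend : Tendsto (fun M => P y {ω | ∀ m, 1 ≤ m → m ≤ M → X (0 + m) ω ∉ A})
        atTop (𝓝 0) := by
      have := tendsto_measure_iInter_atTop (μ := P y)
        (s := fun M => {ω | ∀ m, 1 ≤ m → m ≤ M → X (0 + m) ω ∉ A})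
        (fun M => (stmt17_measN hA hXmeas 0 M).nullMeasurableSet) hmono
        ⟨0, measure_ne_top _ _⟩
      rwa [hiInter, hnull] at this
    have := (ENNReal.tendsto_toReal (a := 0) (by simp)).comp htend
    simp only [ENNReal.toReal_zero] at this
    have heq : (fun M => v M y)
        = fun M => (P y {ω | ∀ m, 1 ≤ m → m ≤ M → X (0 + m) ω ∉ A}).toReal := by
      ext M; exact hveval y M
    rw [heq]
    exact this
  -- A is visited after any time, a.s.
  have hAio : ∀ n : ℕ, P x {ω | ∀ m, 1 ≤ m → X (n + m) ω ∉ A} = 0 := by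
    intro n
    have hle : ∀ M : ℕ, (P x {ω | ∀ m, 1 ≤ m → X (n + m) ω ∉ A}).toReal
        ≤ ∫ ω, v M (X n ω) ∂(P x) := by
      intro M
      have hsub : {ω | ∀ m, 1 ≤ m → X (n + m) ω ∉ A}
          ⊆ {ω | ∀ m, 1 ≤ m → m ≤ M → X (n + m) ω ∉ A} :=
        fun ω hω m h1 _ => hω m h1
      have hmeasint : (P x {ω | ∀ m, 1 ≤ m → m ≤ M → X (n + m) ω ∉ A}).toReal
          = ∫ ω, v M (X n ω) ∂(P x) := by
        have h1 : ∫ ω, pProd X (lA M) n ω ∂(P x) = ∫ ω, v M (X n ω) ∂(P x) :=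
          stmt17_integral_pProd F hXmeas hXF (hM x) (lA M) (hlA M) n
        have h2 : ∫ ω, pProd X (lA M) n ω ∂(P x)
            = (P x {ω | ∀ m, 1 ≤ m → m ≤ M → X (n + m) ω ∉ A}).toReal := by
          have : (fun ω => pProd X (lA M) n ω)
              = Set.indicator {ω' | ∀ m, 1 ≤ m → m ≤ M → X (n + m) ω' ∉ A}
                  (fun _ => (1 : ℝ)) := by
            ext ω; exact stmt17_pProd_avoid A M n ω
          rw [this, stmt17_integral_ind (stmt17_measN hA hXmeas n M)]
        rw [← h2, h1]
      rw [← hmeasint]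
      exact ENNReal.toReal_mono (measure_ne_top _ _) (measure_mono hsub)
    have htendint : Tendsto (fun M => ∫ ω, v M (X n ω) ∂(P x)) atTop (𝓝 0) := by
      have h0 : ∫ ω, (0 : ℝ) ∂(P x) = 0 := integral_zero _ _
      rw [← h0]
      refine tendsto_integral_of_dominated_convergence (fun _ => (1 : ℝ))
        (fun M => ((hvOk M).1.comp (hXmeas n)).aestronglyMeasurable)
        (integrable_const 1) (fun M => ae_of_all _ fun ω => ?_)
        (ae_of_all _ fun ω => hv0 (X n ω))
      rw [Real.norm_eq_abs, abs_le]
      have hb := (hvOk M).2 (X n ω)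
      constructor
      · show -(1 : ℝ) ≤ v M (X n ω)
        linarith [hb.1]
      · show v M (X n ω) ≤ (1 : ℝ)
        exact hb.2
    have hfin : (P x {ω | ∀ m, 1 ≤ m → X (n + m) ω ∉ A}).toReal ≤ 0 :=
      le_of_tendsto_of_tendsto' tendsto_const_nhds htendint hle
    have : (P x {ω | ∀ m, 1 ≤ m → X (n + m) ω ∉ A}).toReal = 0 :=
      le_antisymm hfin ENNReal.toReal_nonneg
    rcases (ENNReal.toReal_eq_zero_iff _).mp this with h | h
    · exact h
    · exact absurd h (measure_ne_top _ _)
  -- the bad event D and Lévy's upward theorem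
  set D : Set Ω := {ω | ∀ n, 1 ≤ n → X n ω ∉ E} with hDdef
  have hDmeas : MeasurableSet D := by
    have : D = ⋂ (n : ℕ), ⋂ (_ : 1 ≤ n), (X n) ⁻¹' Eᶜ := by
      ext ω; simp [hDdef, Set.mem_iInter, Set.mem_preimage]
    rw [this]
    exact MeasurableSet.iInter fun n => MeasurableSet.iInter fun _ => (hXmeas n) hE.compl
  have hDsup : MeasurableSet[⨆ n, (F n : MeasurableSpace Ω)] D := by
    have : D = ⋂ (n : ℕ), ⋂ (_ : 1 ≤ n), (X n) ⁻¹' Eᶜ := by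
      ext ω; simp [hDdef, Set.mem_iInter, Set.mem_preimage]
    rw [this]
    refine MeasurableSet.iInter fun n => MeasurableSet.iInter fun _ => ?_
    exact le_iSup (fun n => (F n : MeasurableSpace Ω)) n _ ((hXF n) hE.compl)
  set Z : Ω → ℝ := Set.indicator D (fun _ => (1 : ℝ)) with hZdef
  have hZint : Integrable Z (P x) :=
    stmt17_integrable_of_le_one ((measurable_one.indicator hDmeas).aestronglyMeasurable)
      (fun ω => Set.indicator_nonneg (fun _ _ => zero_le_one) _)
      (fun ω => Set.indicator_apply_le' (fun _ => le_rfl) (fun _ => zero_le_one))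
  have hZsm : StronglyMeasurable[⨆ n, (F n : MeasurableSpace Ω)] Z :=
    stronglyMeasurable_const.indicator hDsup
  have hLevy : ∀ᵐ ω ∂P x, Tendsto (fun n => ((P x)[Z | F n]) ω) atTop (𝓝 (Z ω)) :=
    hZint.tendsto_ae_condExp hZsm
  -- the conditional bound
  have hbound : ∀ n : ℕ, ((P x)[Z | F n]) ≤ᵐ[P x] fun ω => 1 - w (X n ω) := by
    intro n
    have hpp := pProd_ok X hXmeas l₁ hl₁ n
    have hZle : ∀ ω, Z ω ≤ 1 - pProd X l₁ n ω := by
      intro ω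
      by_cases hω : ω ∈ D
      · rw [hZdef]
        rw [Set.indicator_of_mem hω]
        have hnotE : X (n + n₀) ω ∉ E := hω (n + n₀) (by omega)
        rw [hpProd₁ n ω, Set.indicator_of_notMem hnotE]
        norm_num
      · rw [hZdef, Set.indicator_of_notMem hω]
        linarith [(hpp.2 ω).2]
    have hint : Integrable (fun ω => pProd X l₁ n ω) (P x) :=
      stmt17_integrable_of_le_one hpp.1.aestronglyMeasurable (fun ω => (hpp.2 ω).1)
        (fun ω => (hpp.2 ω).2)
    have hint1 : Integrable (fun ω => 1 - pProd X l₁ n ω) (P x) :=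
      (integrable_const 1).sub hint
    have hmono := condExp_mono (m := F n) hZint hint1 (ae_of_all _ hZle)
    have hsub : (P x)[fun ω => 1 - pProd X l₁ n ω | F n]
        =ᵐ[P x] fun ω => 1 - w (X n ω) := by
      have h1 := condExp_sub (m := F n) (μ := P x) (integrable_const (1 : ℝ)) hint
      have h2 : (P x)[fun _ω => (1 : ℝ) | F n] = fun _ω => (1 : ℝ) :=
        condExp_const (F.le n) 1
      have h3 := stmt17_master F hXmeas hXF (hM x) l₁ hl₁ n
      have h4 : (fun ω => (1 : ℝ) - pProd X l₁ n ω)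
          = (fun _ω => (1 : ℝ)) - fun ω => pProd X l₁ n ω := rfl
      rw [h4]
      refine h1.trans ?_
      filter_upwards [h3] with ω hω
      simp only [Pi.sub_apply, h2]
      rw [hω]
    exact hmono.trans (hsub.le)
  -- the hitting-A events as a.e. statements
  have hAae : ∀ n : ℕ, ∀ᵐ ω ∂P x, ∃ m, 1 ≤ m ∧ X (n + m) ω ∈ A := by
    intro n
    rw [ae_iff]
    have hthis : {ω | ¬∃ m, 1 ≤ m ∧ X (n + m) ω ∈ A}
        = {ω | ∀ m, 1 ≤ m → X (n + m) ω ∉ A} := by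
      ext ω
      simp only [Set.mem_setOf_eq, not_exists, not_and]
    rw [hthis]
    exact hAio n
  -- putting everything together
  have hae : ∀ᵐ ω ∂P x, ω ∉ D := by
    filter_upwards [hLevy, (ae_all_iff).mpr hbound, (ae_all_iff).mpr hAae]
      with ω hten hbnd hhit
    intro hωD
    have hfreq : ∃ᶠ n in atTop, X n ω ∈ A := by
      rw [frequently_atTop]
      intro N
      obtain ⟨m, hm1, hmA⟩ := hhit N
      exact ⟨N + m, Nat.le_add_right N m, hmA⟩
    have hfreq2 : ∃ᶠ n in atTop, ((P x)[Z | F n]) ω ∈ Set.Iic (1 - c) := by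
      refine hfreq.mono fun n hn => ?_
      have h1 : ((P x)[Z | F n]) ω ≤ 1 - w (X n ω) := hbnd n
      have h2 : c ≤ w (X n ω) := hwA (X n ω) hn
      simp only [Set.mem_Iic]
      linarith
    have hmem : Z ω ∈ Set.Iic (1 - c) :=
      IsClosed.mem_of_frequently_of_tendsto isClosed_Iic hfreq2 hten
    rw [hZdef, Set.indicator_of_mem hωD] at hmem
    simp only [Set.mem_Iic] at hmem
    linarith
  have hD0 : P x D = 0 := by
    have h := ae_iff.mp hae
    simpa only [not_not, Set.setOf_mem_eq] using h
  have hset : {ω | ∃ n : ℕ, 1 ≤ n ∧ X n ω ∈ E} = Dᶜ := by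
    ext ω
    simp only [Set.mem_compl_iff, hDdef, Set.mem_setOf_eq]
    constructor
    · rintro ⟨n, h1, h2⟩ hall
      exact hall n h1 h2
    · intro h
      by_contra hcon
      apply h
      intro n h1 h2
      exact hcon ⟨n, h1, h2⟩
  rw [hset, measure_compl hDmeas (measure_ne_top _ _), hD0, measure_univ]
  simp
end

section
/- Let {(ρ_n, ε_n)}_{n≥1} be i.i.d. with ε_1 uniform on (-1,1), ρ_1 bounded with E(log|ρ_1|) < 0 and P(ρ_1 = 0) = 0, and ρ_1 independent of ε_1. Then there exist c < 0 < d, a finite measure φ on R with φ([c,d]) > 0, and α ∈ (0,1) such that inf_{c ≤ x ≤ d} P(ρ_1 x + ε_1 ∈ B) ≥ α φ(B) for all Borel sets B. -/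
open MeasureTheory ProbabilityTheory

/-! For `|x| ≤ d := 1 / (2 max(M, 1))` the shift `ρ₁ x` lies in `[-1/2, 1/2]`, so the translate of
`(-1, 1)` by `-ρ₁ x` always contains `(-1/2, 1/2)`. Conditioning on `ρ₁` (independence), the law of
`ρ₁ x + ε₁` therefore dominates half of Lebesgue measure on `(-1/2, 1/2)`, uniformly in `x`. -/

namespace ProbabilityTheory

theorem IndepFun.measure_prodMk_mem_eq_lintegral {Ω α β : Type*} [MeasurableSpace Ω]
    [MeasurableSpace α] [MeasurableSpace β] {P : Measure Ω} [IsFiniteMeasure P]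
    {X : Ω → α} {Y : Ω → β} (hX : AEMeasurable X P) (hY : AEMeasurable Y P)
    (h : IndepFun X Y P) {S : Set (α × β)} (hS : MeasurableSet S) :
    P {ω | (X ω, Y ω) ∈ S} = ∫⁻ a, P.map Y (Prod.mk a ⁻¹' S) ∂P.map X := by
  rw [← Measure.prod_apply hS, ← (indepFun_iff_map_prod_eq_prod_map_map hX hY).mp h,
    Measure.map_apply_of_aemeasurable (hX.prodMk hY) hS]
  rfl

end ProbabilityTheory

theorem MeasureTheory.Measure.restrict_apply_le_restrict_preimage_add {G : Type*}
    [MeasurableSpace G] [AddGroup G] [MeasurableAdd G] (μ : Measure G) [μ.IsAddLeftInvariant]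
    {S T B : Set G} {t : G} (hST : (t + ·) ⁻¹' S ⊆ T) (hB : MeasurableSet B) :
    μ.restrict S B ≤ μ.restrict T ((t + ·) ⁻¹' B) :=
  calc μ.restrict S B = μ (B ∩ S) := Measure.restrict_apply hB
    _ = μ ((t + ·) ⁻¹' (B ∩ S)) := (measure_preimage_add μ t _).symm
    _ ≤ μ ((t + ·) ⁻¹' B ∩ T) := measure_mono fun _ hx ↦ ⟨hx.1, hST hx.2⟩
    _ ≤ μ.restrict T ((t + ·) ⁻¹' B) := Measure.le_restrict_apply _ _

theorem preimage_add_Ioo_half_subset_Ioo {t : ℝ} (ht : |t| ≤ 1 / 2) :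
    (t + ·) ⁻¹' Set.Ioo (-(1 / 2)) (1 / 2) ⊆ Set.Ioo (-1 : ℝ) 1 := by
  intro e he
  obtain ⟨ht₁, ht₂⟩ := abs_le.mp ht
  simp only [Set.mem_preimage, Set.mem_Ioo] at he ⊢
  constructor <;> linarith [he.1, he.2]

theorem volume_restrict_Ioo_half_Icc_pos {d : ℝ} (hd : 0 < d) (hd_half : d ≤ 1 / 2) :
    0 < volume.restrict (Set.Ioo (-(1 / 2) : ℝ) (1 / 2)) (Set.Icc (-d) d) :=
  calc (0 : ENNReal) < volume (Set.Ioo (-d) d) := by simp [hd]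
    _ ≤ volume.restrict (Set.Ioo (-(1 / 2) : ℝ) (1 / 2)) (Set.Icc (-d) d) := by
      rw [Measure.restrict_apply measurableSet_Icc]
      refine measure_mono fun y hy ↦ ⟨Set.Ioo_subset_Icc_self hy, ?_, ?_⟩ <;> linarith [hy.1, hy.2]

theorem abs_mul_le_half {M r x : ℝ} (hr : |r| ≤ M) (hx : |x| ≤ (2 * max M 1)⁻¹) :
    |r * x| ≤ 1 / 2 := by
  have hm : 0 < max M 1 := lt_max_of_lt_right one_pos
  calc |r * x| = |r| * |x| := abs_mul r x
    _ ≤ max M 1 * (2 * max M 1)⁻¹ :=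
      mul_le_mul (hr.trans (le_max_left M 1)) hx (abs_nonneg x) hm.le
    _ = 1 / 2 := by field_simp

theorem stmt18_general {Ω : Type*} [MeasurableSpace Ω] (P : Measure Ω) [IsProbabilityMeasure P]
    (ρ ε : Ω → ℝ) (hρ : Measurable ρ) (hε : Measurable ε)
    (hindep : IndepFun ρ ε P)
    (hunif : P.map ε = (2⁻¹ : ENNReal) • MeasureTheory.volume.restrict (Set.Ioo (-1 : ℝ) 1))
    (M : ℝ) (hbdd : ∀ᵐ ω ∂P, |ρ ω| ≤ M) :
    ∃ (c d : ℝ), c < 0 ∧ 0 < d ∧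
      ∃ (φ : Measure ℝ), IsFiniteMeasure φ ∧ 0 < φ (Set.Icc c d) ∧
        ∃ α : ℝ, 0 < α ∧ α < 1 ∧
          ∀ x ∈ Set.Icc c d, ∀ B : Set ℝ, MeasurableSet B →
            ENNReal.ofReal α * φ B ≤ P {ω | ρ ω * x + ε ω ∈ B} := by
  set d : ℝ := (2 * max M 1)⁻¹
  have hd : 0 < d := by positivity
  have hd_half : d ≤ 1 / 2 := by
    rw [one_div]; exact inv_anti₀ two_pos (by linarith [le_max_right M 1])
  set φ := volume.restrict (Set.Ioo (-(1 / 2) : ℝ) (1 / 2))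
  refine ⟨-d, d, neg_neg_of_pos hd, hd, φ, inferInstance, ?_, 1 / 2, by norm_num, by norm_num, ?_⟩
  · exact volume_restrict_Ioo_half_Icc_pos hd hd_half
  · intro x hx B hB
    have hρ_law : ∀ᵐ r ∂P.map ρ, |r| ≤ M :=
      (ae_map_iff hρ.aemeasurable (measurableSet_le measurable_abs measurable_const)).mpr hbdd
    have hS : MeasurableSet {p : ℝ × ℝ | p.1 * x + p.2 ∈ B} :=
      ((measurable_fst.mul_const x).add measurable_snd) hB
    have hshift : ∀ r, |r| ≤ M → 2⁻¹ * φ B ≤ P.map ε ((r * x + ·) ⁻¹' B) := fun r hr ↦ by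
      rw [hunif, Measure.smul_apply, smul_eq_mul]
      exact mul_le_mul_right (volume.restrict_apply_le_restrict_preimage_add
        (preimage_add_Ioo_half_subset_Ioo (abs_mul_le_half hr (abs_le.mpr hx))) hB) _
    calc ENNReal.ofReal (1 / 2) * φ B = ∫⁻ _, 2⁻¹ * φ B ∂P.map ρ := by
          have := Measure.isProbabilityMeasure_map (μ := P) hρ.aemeasurable
          rw [lintegral_const, measure_univ, mul_one, one_div, ENNReal.ofReal_inv_of_pos two_pos,
            ENNReal.ofReal_ofNat]
      _ ≤ ∫⁻ r, P.map ε (Prod.mk r ⁻¹' {p : ℝ × ℝ | p.1 * x + p.2 ∈ B}) ∂P.map ρ :=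
          lintegral_mono_ae (hρ_law.mono hshift)
      _ = P {ω | ρ ω * x + ε ω ∈ B} :=
          (hindep.measure_prodMk_mem_eq_lintegral hρ.aemeasurable hε.aemeasurable hS).symm

/-- Let `ε₁` be uniform on `(-1,1)`, `ρ₁` bounded with
`-∞ ≤ E(log|ρ₁|) < 0` and `P(ρ₁ = 0) = 0`, with `ρ₁` independent of `ε₁`. Then there
exist `c < 0 < d`, a finite measure `φ` with `φ([c,d]) > 0`, and `α ∈ (0,1)` such that
`P(ρ₁ x + ε₁ ∈ B) ≥ α φ(B)` for all `x ∈ [c,d]` and all Borel sets `B`. -/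
theorem stmt18 {Ω : Type*} [MeasurableSpace Ω] (P : Measure Ω) [IsProbabilityMeasure P]
    (ρ ε : Ω → ℝ) (hρ : Measurable ρ) (hε : Measurable ε)
    (hindep : IndepFun ρ ε P)
    (hunif : P.map ε = (2⁻¹ : ENNReal) • MeasureTheory.volume.restrict (Set.Ioo (-1 : ℝ) 1))
    (M : ℝ) (hbdd : ∀ᵐ ω ∂P, |ρ ω| ≤ M)
    (hρpos : ∫⁻ ω, ENNReal.ofReal (max (Real.log |ρ ω|) 0) ∂P < ⊤)
    (hρneg : ∫⁻ ω, ENNReal.ofReal (max (Real.log |ρ ω|) 0) ∂P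
      < ∫⁻ ω, ENNReal.ofReal (max (-Real.log |ρ ω|) 0) ∂P)
    (hρne0 : P {ω | ρ ω = 0} = 0) :
    ∃ (c d : ℝ), c < 0 ∧ 0 < d ∧
      ∃ (φ : Measure ℝ), IsFiniteMeasure φ ∧ 0 < φ (Set.Icc c d) ∧
        ∃ α : ℝ, 0 < α ∧ α < 1 ∧
          ∀ x ∈ Set.Icc c d, ∀ B : Set ℝ, MeasurableSet B →
            ENNReal.ofReal α * φ B ≤ P {ω | ρ ω * x + ε ω ∈ B} :=
  stmt18_general P ρ ε hρ hε hindep hunif M hbdd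
end
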